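/- arXiv:2411.11203 — 7 statements merged into one kernel-verified Lean document; each statement's English description precedes it below -/
import Mathlib

section
/- Let W be a nonempty finite type, P a probability mass function on W, and G ⊆ W with P_G := Σ_{w∈G} P_w > 0. Let (ζ, w) be produced by the hard green-list maximal-coupling decoder. Then the conditional distribution of ζ given the event {w ∈ G} is uniform on [0, P_G]; equivalently, for every Borel set A ⊆ [0,1], the probability of {ζ ∈ A and w ∈ G} equals the Lebesgue measure of A ∩ [0, P_G]. (Lemma 3.1.) -/
open MeasureTheory Set

/-- **Lemma 3.1.** `W` is a nonempty finite vocabulary, `P` a probability mass function on `W`,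
`G` a green list with `PG = ∑ w ∈ G, P w > 0`.  The hard green-list maximal-coupling decoder
produces `(ζ, tok)` with joint law encoded by `hjoint`: `ζ` is uniform on `[0,1]`; on
`{ζ ≤ PG}` the token is drawn from the normalized green distribution
`w ↦ P w · 1{w ∈ G} / PG`, and on `{ζ > PG}` from the normalized red distribution
`w ↦ P w · 1{w ∉ G} / (1 - PG)`, independently of `ζ` within each branch.
Conclusion: the conditional distribution of `ζ` given `{tok ∈ G}` is uniform on `[0, PG]`;
equivalently, for every Borel set `A ⊆ [0,1]` (indeed every Borel `A`),
`ℙ(ζ ∈ A ∧ tok ∈ G) = Leb(A ∩ [0, PG])`. -/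
theorem hard_greenlist_cond_given_green
    {W : Type*} [Fintype W] [Nonempty W] [DecidableEq W] [MeasurableSpace W] [MeasurableSingletonClass W]
    (P : W → ℝ) (hP0 : ∀ w, 0 ≤ P w) (hP1 : ∑ w, P w = 1)
    (G : Finset W) (PG : ℝ) (hPG : PG = ∑ w ∈ G, P w) (hPGpos : 0 < PG)
    {Ω : Type*} [MeasurableSpace Ω] (μ : Measure Ω) [IsProbabilityMeasure μ]
    (ζ : Ω → ℝ) (tok : Ω → W) (hζ : Measurable ζ) (htok : Measurable tok)
    (hjoint : ∀ (w₀ : W) (A : Set ℝ), MeasurableSet A →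
      (μ {ω | ζ ω ∈ A ∧ tok ω = w₀}).toReal =
        (volume (A ∩ Icc 0 PG)).toReal * ((if w₀ ∈ G then P w₀ else 0) / PG) +
        (volume (A ∩ Ioc PG 1)).toReal * ((if w₀ ∈ G then 0 else P w₀) / (1 - PG))) :
    ∀ A : Set ℝ, MeasurableSet A →
      (μ {ω | ζ ω ∈ A ∧ tok ω ∈ G}).toReal = (volume (A ∩ Icc 0 PG)).toReal := by

  intro A hA
  have hdecomp : {ω | ζ ω ∈ A ∧ tok ω ∈ G} = ⋃ w ∈ G, {ω | ζ ω ∈ A ∧ tok ω = w} := by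
    ext ω
    simp only [Set.mem_setOf_eq, Set.mem_iUnion]
    constructor
    · rintro ⟨hζA, hG⟩; exact ⟨tok ω, hG, hζA, rfl⟩
    · rintro ⟨w, hw, hζA, htw⟩; exact ⟨hζA, htw ▸ hw⟩
  have hmeas : ∀ w : W, MeasurableSet {ω | ζ ω ∈ A ∧ tok ω = w} := fun w =>
    (hζ hA).inter (htok (measurableSet_singleton w))
  have hsum : μ {ω | ζ ω ∈ A ∧ tok ω ∈ G} = ∑ w ∈ G, μ {ω | ζ ω ∈ A ∧ tok ω = w} := by
    rw [hdecomp, measure_biUnion_finset ?_ (fun w _ => hmeas w)]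
    intro x _ y _ hxy
    apply Set.disjoint_left.2
    rintro ω ⟨_, hx⟩ ⟨_, hy⟩
    exact hxy (hx ▸ hy ▸ rfl)
  have hfin : ∀ w ∈ G, μ {ω | ζ ω ∈ A ∧ tok ω = w} ≠ ⊤ := fun w _ => measure_ne_top μ _
  rw [hsum, ENNReal.toReal_sum hfin]
  have : ∀ w ∈ G, (μ {ω | ζ ω ∈ A ∧ tok ω = w}).toReal
      = (volume (A ∩ Icc 0 PG)).toReal * (P w / PG) := by
    intro w hw
    rw [hjoint w A hA, if_pos hw, if_pos hw]
    ring
  rw [Finset.sum_congr rfl this, ← Finset.mul_sum, ← Finset.sum_div, ← hPG,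
    div_self hPGpos.ne', mul_one]
end

section
/- Let 0 < r < 1 and 0 < p < 1 with 2p − r > 1, and suppose a_{m,t} ≥ m^{-r} for all m and all 1 ≤ t ≤ m. Then the null and alternative hypotheses merge asymptotically: TV(P0_m, P1_m) → 0 as m → ∞; consequently, for every sequence of measurable rejection regions A_m ⊆ [0,1]^m, the sum of the type I error P0_m(A_m) and the type II error P1_m([0,1]^m \ A_m) tends to 1 as m → ∞. (Theorem 3.1, impossibility of detection.) -/
/-!
Under `P1_m` the `t`-th coordinate has density `g_t = 1 - ε + (ε / a_t) 𝟙[0, a_t]` with respect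
to `U[0,1]`, so `P1_m` has density `G = ∏ g_t(x_t)` with respect to `P0_m`. For every event `A`,
Cauchy–Schwarz gives `|P0_m(A) - P1_m(A)| ≤ ∫ |1 - G| dP0_m ≤ (∫ G² dP0_m - 1)^{1/2}`, and
by independence `∫ G² dP0_m = ∏ (1 - ε² + ε² / a_t) ≤ exp (m ε² m^r) = exp (m^{1 + r - 2p})`,
which tends to `1` because `2p - r > 1`. The statement about the two errors follows from
`P0_m(A) + P1_m(Aᶜ) - 1 = P0_m(A) - P1_m(A)`.
-/

open MeasureTheory Filter

/-- The uniform distribution on `[0, a]` (for `a > 0`). -/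
noncomputable def unif (a : ℝ) : Measure ℝ :=
  (ENNReal.ofReal a)⁻¹ • volume.restrict (Set.Icc 0 a)

/-- The mixture `(1 - ε)·U[0,1] + ε·U[0,a]`. -/
noncomputable def mix (ε a : ℝ) : Measure ℝ :=
  ENNReal.ofReal (1 - ε) • unif 1 + ENNReal.ofReal ε • unif a

/-- The null law `P0_m`: `m` i.i.d. uniform-`[0,1]` coordinates. -/
noncomputable def nullLaw (m : ℕ) : Measure (Fin m → ℝ) :=
  Measure.pi fun _ => unif 1

/-- The alternative law `P1_m`: independent coordinates, the `t`-th distributed as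
`(1 - ε)·U[0,1] + ε·U[0, a t]`. -/
noncomputable def altLaw (m : ℕ) (ε : ℝ) (a : Fin m → ℝ) : Measure (Fin m → ℝ) :=
  Measure.pi fun t => mix ε (a t)

/-- Total variation distance `sup_A |μ(A) - ν(A)|` over measurable sets. -/
noncomputable def TV {α : Type*} [MeasurableSpace α] (μ ν : Measure α) : ℝ :=
  ⨆ A : {s : Set α // MeasurableSet s}, |(μ A).toReal - (ν A).toReal|

open scoped ENNReal
open Set ProbabilityTheory

theorem MeasureTheory.lintegral_fin_nat_prod_eq_prod {n : ℕ} {E : Fin n → Type*}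
    {mE : ∀ i, MeasurableSpace (E i)} (μ : (i : Fin n) → Measure (E i)) [∀ i, SigmaFinite (μ i)]
    {f : (i : Fin n) → E i → ℝ≥0∞} (hf : ∀ i, Measurable (f i)) :
    ∫⁻ x : (i : Fin n) → E i, ∏ i, f i (x i) ∂(Measure.pi μ) = ∏ i, ∫⁻ x, f i x ∂(μ i) := by
  induction n with
  | zero => simp
  | succ n ih =>
    calc
      _ = ∫⁻ x : E 0 × ((i : Fin n) → E (Fin.succ i)),
          f 0 x.1 * ∏ i : Fin n, f (Fin.succ i) (x.2 i)
          ∂((μ 0).prod (Measure.pi (fun i ↦ μ i.succ))) := by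
        rw [← ((measurePreserving_piFinSuccAbove μ 0).symm).lintegral_comp_emb
          (MeasurableEquiv.measurableEmbedding _)]
        simp_rw [MeasurableEquiv.piFinSuccAbove_symm_apply, Fin.insertNthEquiv,
          Fin.prod_univ_succ, Fin.insertNth_zero, Equiv.coe_fn_mk, Fin.cons_succ]
        rfl
      _ = (∫⁻ x, f 0 x ∂μ 0) * ∏ i : Fin n, ∫⁻ x, f i.succ x ∂(μ i.succ) := by
        rw [lintegral_prod_mul (f := f 0)
          (g := fun y : (i : Fin n) → E i.succ => ∏ i, f i.succ (y i)) (hf 0).aemeasurable (Finset.measurable_prod _ fun i _ =>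
            (hf i.succ).comp (measurable_pi_apply i)).aemeasurable, ih _ fun i => hf i.succ]
      _ = ∏ i, ∫⁻ x, f i x ∂(μ i) := by rw [Fin.prod_univ_succ]

theorem MeasureTheory.lintegral_fintype_prod_eq_prod {ι : Type*} [Fintype ι] {E : ι → Type*}
    {mE : ∀ i, MeasurableSpace (E i)} (μ : (i : ι) → Measure (E i)) [∀ i, SigmaFinite (μ i)]
    {f : (i : ι) → E i → ℝ≥0∞} (hf : ∀ i, Measurable (f i)) :
    ∫⁻ x : (i : ι) → E i, ∏ i, f i (x i) ∂(Measure.pi μ) = ∏ i, ∫⁻ x, f i x ∂(μ i) := by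
  let e := (Fintype.equivFin ι).symm
  rw [← (measurePreserving_piCongrLeft _ e).lintegral_comp_emb
    (MeasurableEquiv.measurableEmbedding _)]
  simp_rw [← e.prod_comp, MeasurableEquiv.coe_piCongrLeft, Equiv.piCongrLeft_apply_apply]
  exact lintegral_fin_nat_prod_eq_prod _ fun i => hf (e i)

theorem MeasureTheory.Measure.pi_withDensity {ι : Type*} [Fintype ι] {E : ι → Type*}
    {mE : ∀ i, MeasurableSpace (E i)} (μ : (i : ι) → Measure (E i)) [∀ i, SigmaFinite (μ i)]
    {f : (i : ι) → E i → ℝ≥0∞} (hf : ∀ i, Measurable (f i))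
    [∀ i, SigmaFinite ((μ i).withDensity (f i))] :
    Measure.pi (fun i => (μ i).withDensity (f i)) =
      (Measure.pi μ).withDensity fun x => ∏ i, f i (x i) := by
  refine Measure.pi_eq fun s hs => ?_
  have hbox : (univ.pi s).indicator (fun x => ∏ i, f i (x i)) =
      fun x => ∏ i, (s i).indicator (f i) (x i) := by
    ext x
    by_cases hx : x ∈ univ.pi s
    · rw [indicator_of_mem hx]
      exact Finset.prod_congr rfl fun i _ => (indicator_of_mem (hx i (mem_univ i)) _).symm
    · obtain ⟨i, -, hi⟩ := not_forall₂.mp hx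
      rw [indicator_of_notMem hx,
        Finset.prod_eq_zero (Finset.mem_univ i) (indicator_of_notMem hi _)]
  rw [withDensity_apply _ (MeasurableSet.univ_pi hs), ← lintegral_indicator
    (MeasurableSet.univ_pi hs), hbox,
    lintegral_fintype_prod_eq_prod μ fun i => (hf i).indicator (hs i)]
  exact Finset.prod_congr rfl fun i _ => by
    rw [lintegral_indicator (hs i), withDensity_apply _ (hs i)]

section
variable {α : Type*} [MeasurableSpace α] {μ : Measure α} [IsProbabilityMeasure μ]

-- Cauchy–Schwarz, in the form `0 ≤ Var |g|`.
theorem integral_abs_le_sqrt_integral_sq {g : α → ℝ} (hg : MemLp g 2 μ) :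
    ∫ x, |g x| ∂μ ≤ √(∫ x, g x ^ 2 ∂μ) := by
  refine (Real.le_sqrt (integral_nonneg fun _ => abs_nonneg _)
    (integral_nonneg fun _ => sq_nonneg _)).mpr ?_
  have h := variance_nonneg |g| μ
  rw [variance_eq_sub hg.abs] at h
  simpa [sq_abs] using h

theorem abs_measureReal_sub_withDensity_le {f : α → ℝ} (hf0 : ∀ x, 0 ≤ f x)
    (hf : MemLp f 2 μ) (hf1 : ∫ x, f x ∂μ = 1) {A : Set α} (hA : MeasurableSet A) :
    |μ.real A - (μ.withDensity fun x => ENNReal.ofReal (f x)).real A| ≤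
      √(∫ x, f x ^ 2 ∂μ - 1) := by
  have hfi : Integrable f μ := hf.integrable one_le_two
  have hdensity : (μ.withDensity fun x => ENNReal.ofReal (f x)).real A = ∫ x in A, f x ∂μ := by
    rw [measureReal_def, withDensity_apply _ hA, ← ofReal_integral_eq_lintegral_ofReal
      hfi.restrict (ae_of_all _ hf0), ENNReal.toReal_ofReal (integral_nonneg hf0)]
  have hdiff : MemLp (fun x => 1 - f x) 2 μ := (memLp_const 1).sub hf
  have hsq : ∫ x, (1 - f x) ^ 2 ∂μ = ∫ x, f x ^ 2 ∂μ - 1 := by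
    have hvar := variance_eq_sub hf
    rw [variance_eq_integral hf.aestronglyMeasurable.aemeasurable, hf1] at hvar
    simp only [Pi.pow_apply, one_pow] at hvar
    rw [← hvar]
    congr 1 with x
    ring
  calc |μ.real A - (μ.withDensity fun x => ENNReal.ofReal (f x)).real A|
      = |∫ x in A, (1 - f x) ∂μ| := by
        rw [hdensity, integral_sub (integrable_const 1) hfi.restrict, setIntegral_const,
          smul_eq_mul, mul_one]
    _ ≤ ∫ x in A, |1 - f x| ∂μ := abs_integral_le_integral_abs
    _ ≤ ∫ x, |1 - f x| ∂μ := setIntegral_le_integral (hdiff.integrable one_le_two).abs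
        (ae_of_all _ fun _ => abs_nonneg _)
    _ ≤ √(∫ x, f x ^ 2 ∂μ - 1) := hsq ▸ integral_abs_le_sqrt_integral_sq hdiff

end

section TV
variable {α : Type*} [MeasurableSpace α] {μ ν : Measure α}

theorem TV_nonneg : 0 ≤ TV μ ν := Real.iSup_nonneg fun _ => abs_nonneg _

theorem TV_le {B : ℝ} (hB : ∀ A, MeasurableSet A → |μ.real A - ν.real A| ≤ B) : TV μ ν ≤ B :=
  haveI : Nonempty {s : Set α // MeasurableSet s} := ⟨⟨∅, .empty⟩⟩
  ciSup_le fun A => hB A.1 A.2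

variable [IsProbabilityMeasure μ] [IsProbabilityMeasure ν]

theorem abs_measureReal_sub_le_TV {A : Set α} (hA : MeasurableSet A) :
    |μ.real A - ν.real A| ≤ TV μ ν := by
  refine le_ciSup (f := fun A : {s : Set α // MeasurableSet s} => |μ.real A - ν.real A|)
    ⟨1, ?_⟩ ⟨A, hA⟩
  rintro _ ⟨B, rfl⟩
  have := measureReal_le_one (μ := μ) (s := B.1)
  have := measureReal_le_one (μ := ν) (s := B.1)
  have : 0 ≤ μ.real B.1 := measureReal_nonneg
  have : 0 ≤ ν.real B.1 := measureReal_nonneg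
  exact abs_sub_le_iff.mpr ⟨by linarith, by linarith⟩

theorem abs_measureReal_add_measureReal_compl_sub_one_le_TV {A : Set α} (hA : MeasurableSet A) :
    |μ.real A + ν.real Aᶜ - 1| ≤ TV μ ν := by
  rw [probReal_compl_eq_one_sub hA]
  convert abs_measureReal_sub_le_TV (μ := μ) (ν := ν) hA using 2
  ring

end TV

theorem unif_one : unif 1 = volume.restrict (Icc 0 1) := by
  simp [unif]

theorem isProbabilityMeasure_unif {a : ℝ} (ha : 0 < a) : IsProbabilityMeasure (unif a) :=
  ⟨by rw [unif, Measure.smul_apply, Measure.restrict_apply_univ, Real.volume_Icc, sub_zero,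
    smul_eq_mul, ENNReal.inv_mul_cancel (by simpa using ha) ENNReal.ofReal_ne_top]⟩

instance : IsProbabilityMeasure (unif 1) := isProbabilityMeasure_unif one_pos

theorem isProbabilityMeasure_mix {ε a : ℝ} (hε0 : 0 ≤ ε) (hε1 : ε ≤ 1) (ha : 0 < a) :
    IsProbabilityMeasure (mix ε a) := by
  have := isProbabilityMeasure_unif ha
  constructor
  rw [mix, Measure.add_apply, Measure.smul_apply, Measure.smul_apply, measure_univ, measure_univ,
    smul_eq_mul, smul_eq_mul, mul_one, mul_one, ← ENNReal.ofReal_add (by linarith) hε0]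
  norm_num

theorem unif_one_Icc {a : ℝ} (ha1 : a ≤ 1) :
    unif 1 (Icc 0 a) = ENNReal.ofReal a := by
  rw [unif_one, Measure.restrict_apply measurableSet_Icc,
    inter_eq_left.mpr (Icc_subset_Icc le_rfl ha1), Real.volume_Icc, sub_zero]

noncomputable def mixDensity (ε a : ℝ) (x : ℝ) : ℝ :=
  1 - ε + (Icc 0 a).indicator (fun _ => ε / a) x

section mixDensity
variable {ε a : ℝ}

theorem measurable_mixDensity : Measurable (mixDensity ε a) :=
  measurable_const.add (measurable_const.indicator measurableSet_Icc)

theorem mixDensity_nonneg (hε0 : 0 ≤ ε) (hε1 : ε ≤ 1) (ha : 0 < a) (x : ℝ) :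
    0 ≤ mixDensity ε a x :=
  add_nonneg (sub_nonneg.mpr hε1) (indicator_nonneg (fun _ _ => div_nonneg hε0 ha.le) x)

theorem mixDensity_le (hε0 : 0 ≤ ε) (ha : 0 < a) (x : ℝ) :
    mixDensity ε a x ≤ 1 - ε + ε / a := by
  unfold mixDensity
  gcongr
  exact indicator_le_self' (fun _ _ => div_nonneg hε0 ha.le) x

theorem mix_eq_withDensity (hε0 : 0 ≤ ε) (hε1 : ε ≤ 1) (ha0 : 0 < a) (ha1 : a ≤ 1) :
    mix ε a = (unif 1).withDensity fun x => ENNReal.ofReal (mixDensity ε a x) := by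
  have hdensity : (fun x => ENNReal.ofReal (mixDensity ε a x)) =
      (fun _ => ENNReal.ofReal (1 - ε)) + (Icc 0 a).indicator fun _ => ENNReal.ofReal (ε / a) := by
    ext x
    by_cases hx : x ∈ Icc 0 a <;>
      simp [mixDensity, hx, ENNReal.ofReal_add (sub_nonneg.mpr hε1) (div_nonneg hε0 ha0.le)]
  have hrestrict : (unif 1).restrict (Icc 0 a) = volume.restrict (Icc 0 a) := by
    rw [unif_one, Measure.restrict_restrict measurableSet_Icc,
      inter_eq_left.mpr (Icc_subset_Icc le_rfl ha1)]
  rw [hdensity, withDensity_add_left measurable_const, withDensity_const,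
    withDensity_indicator measurableSet_Icc, withDensity_const, hrestrict, mix, unif.eq_1 a,
    smul_smul, ENNReal.ofReal_div_of_pos ha0, ENNReal.div_eq_inv_mul, mul_comm]

theorem integral_indicator_Icc_unif_one (c : ℝ) (ha0 : 0 ≤ a) (ha1 : a ≤ 1) :
    ∫ x, (Icc 0 a).indicator (fun _ => c) x ∂(unif 1) = a * c := by
  rw [integral_indicator_const c measurableSet_Icc, measureReal_def, unif_one_Icc ha1,
    ENNReal.toReal_ofReal ha0, smul_eq_mul]

theorem integral_mixDensity (ha0 : 0 < a) (ha1 : a ≤ 1) :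
    ∫ x, mixDensity ε a x ∂(unif 1) = 1 := by
  unfold mixDensity
  rw [integral_add (integrable_const _) ((integrable_const _).indicator measurableSet_Icc),
    integral_const, integral_indicator_Icc_unif_one _ ha0.le ha1, probReal_univ, one_smul]
  field_simp
  ring

theorem integral_mixDensity_sq (ha0 : 0 < a) (ha1 : a ≤ 1) :
    ∫ x, mixDensity ε a x ^ 2 ∂(unif 1) = 1 - ε ^ 2 + ε ^ 2 / a := by
  have hsq : (fun x => mixDensity ε a x ^ 2) = fun x =>
      (1 - ε) ^ 2 + (Icc 0 a).indicator (fun _ => (ε / a) ^ 2 + 2 * (1 - ε) * (ε / a)) x := by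
    ext x
    by_cases hx : x ∈ Icc 0 a
    · simp [mixDensity, hx]
      ring
    · simp [mixDensity, hx]
  rw [hsq, integral_add (integrable_const _) ((integrable_const _).indicator measurableSet_Icc),
    integral_const, integral_indicator_Icc_unif_one _ ha0.le ha1, probReal_univ, one_smul]
  field_simp
  ring

end mixDensity

instance (m : ℕ) : IsProbabilityMeasure (nullLaw m) := by
  unfold nullLaw
  infer_instance

theorem isProbabilityMeasure_altLaw {m : ℕ} {ε : ℝ} {a : Fin m → ℝ} (hε0 : 0 ≤ ε) (hε1 : ε ≤ 1)
    (ha0 : ∀ t, 0 < a t) : IsProbabilityMeasure (altLaw m ε a) := by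
  have := fun t => isProbabilityMeasure_mix hε0 hε1 (ha0 t)
  unfold altLaw
  infer_instance

noncomputable def altDensity (m : ℕ) (ε : ℝ) (a : Fin m → ℝ) (x : Fin m → ℝ) : ℝ :=
  ∏ t, mixDensity ε (a t) (x t)

section altDensity
variable {m : ℕ} {ε : ℝ} {a : Fin m → ℝ}

theorem altDensity_nonneg (hε0 : 0 ≤ ε) (hε1 : ε ≤ 1) (ha0 : ∀ t, 0 < a t) (x : Fin m → ℝ) :
    0 ≤ altDensity m ε a x :=
  Finset.prod_nonneg fun t _ => mixDensity_nonneg hε0 hε1 (ha0 t) _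

theorem altLaw_eq_withDensity (hε0 : 0 ≤ ε) (hε1 : ε ≤ 1) (ha0 : ∀ t, 0 < a t)
    (ha1 : ∀ t, a t ≤ 1) :
    altLaw m ε a = (nullLaw m).withDensity fun x => ENNReal.ofReal (altDensity m ε a x) := by
  simp_rw [altLaw, nullLaw, fun t => mix_eq_withDensity hε0 hε1 (ha0 t) (ha1 t),
    Measure.pi_withDensity _ fun _ => measurable_mixDensity.ennreal_ofReal, altDensity,
    ENNReal.ofReal_prod_of_nonneg fun t _ => mixDensity_nonneg hε0 hε1 (ha0 t) _]

theorem memLp_altDensity (hε0 : 0 ≤ ε) (hε1 : ε ≤ 1) (ha0 : ∀ t, 0 < a t) :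
    MemLp (altDensity m ε a) 2 (nullLaw m) := by
  refine MemLp.of_bound (Finset.measurable_prod _ fun t _ =>
    measurable_mixDensity.comp (measurable_pi_apply t)).aestronglyMeasurable
    (∏ t, (1 - ε + ε / a t)) (ae_of_all _ fun x => ?_)
  rw [Real.norm_of_nonneg (altDensity_nonneg hε0 hε1 ha0 x)]
  exact Finset.prod_le_prod (fun t _ => mixDensity_nonneg hε0 hε1 (ha0 t) _)
    fun t _ => mixDensity_le hε0 (ha0 t) _

theorem integral_altDensity (ha0 : ∀ t, 0 < a t) (ha1 : ∀ t, a t ≤ 1) :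
    ∫ x, altDensity m ε a x ∂(nullLaw m) = 1 := by
  simp only [nullLaw, altDensity]
  rw [integral_fintype_prod_eq_prod]
  exact Finset.prod_eq_one fun t _ => integral_mixDensity (ha0 t) (ha1 t)

theorem integral_altDensity_sq (ha0 : ∀ t, 0 < a t) (ha1 : ∀ t, a t ≤ 1) :
    ∫ x, altDensity m ε a x ^ 2 ∂(nullLaw m) = ∏ t, (1 - ε ^ 2 + ε ^ 2 / a t) := by
  simp only [nullLaw, altDensity, ← Finset.prod_pow]
  rw [integral_fintype_prod_eq_prod (fun t y => mixDensity ε (a t) y ^ 2)]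
  exact Finset.prod_congr rfl fun t _ => integral_mixDensity_sq (ha0 t) (ha1 t)

theorem TV_nullLaw_altLaw_le (hε0 : 0 ≤ ε) (hε1 : ε ≤ 1) (ha0 : ∀ t, 0 < a t)
    (ha1 : ∀ t, a t ≤ 1) :
    TV (nullLaw m) (altLaw m ε a) ≤ √(∏ t, (1 - ε ^ 2 + ε ^ 2 / a t) - 1) := by
  refine TV_le fun A hA => ?_
  rw [altLaw_eq_withDensity hε0 hε1 ha0 ha1, ← integral_altDensity_sq ha0 ha1]
  exact abs_measureReal_sub_withDensity_le (altDensity_nonneg hε0 hε1 ha0)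
    (memLp_altDensity hε0 hε1 ha0) (integral_altDensity ha0 ha1) hA

end altDensity

theorem prod_one_add_le_exp_sum {ι : Type*} (s : Finset ι) {x : ι → ℝ} (hx : ∀ i ∈ s, -1 ≤ x i) :
    ∏ i ∈ s, (1 + x i) ≤ Real.exp (∑ i ∈ s, x i) := by
  rw [Real.exp_sum]
  exact Finset.prod_le_prod (fun i hi => by linarith [hx i hi])
    fun i _ => by linarith [Real.add_one_le_exp (x i)]

theorem prod_one_sub_sq_add_sq_div_le_exp {m : ℕ} (hm : 0 < m) {p r : ℝ} {a : Fin m → ℝ}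
    (ha0 : ∀ t, 0 < a t) (ha1 : ∀ t, a t ≤ 1) (har : ∀ t, (m : ℝ) ^ (-r) ≤ a t) :
    ∏ t, (1 - ((m : ℝ) ^ (-p)) ^ 2 + ((m : ℝ) ^ (-p)) ^ 2 / a t) ≤
      Real.exp ((m : ℝ) ^ (-(2 * p - r - 1))) := by
  have hm0 : (0 : ℝ) < m := Nat.cast_pos.mpr hm
  set ε := (m : ℝ) ^ (-p)
  have hε_sq : ε ^ 2 = (m : ℝ) ^ (r - 2 * p) * (m : ℝ) ^ (-r) := by
    rw [← Real.rpow_natCast, ← Real.rpow_mul hm0.le, ← Real.rpow_add hm0]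
    ring_nf
  have hterm : ∀ t, ε ^ 2 / a t ≤ (m : ℝ) ^ (r - 2 * p) := fun t => by
    rw [div_le_iff₀ (ha0 t), hε_sq]
    exact mul_le_mul_of_nonneg_left (har t) (Real.rpow_nonneg hm0.le _)
  have hgain : ∀ t, ε ^ 2 ≤ ε ^ 2 / a t := fun t =>
    (le_div_iff₀ (ha0 t)).mpr (mul_le_of_le_one_right (sq_nonneg ε) (ha1 t))
  calc ∏ t, (1 - ε ^ 2 + ε ^ 2 / a t) = ∏ t, (1 + (ε ^ 2 / a t - ε ^ 2)) :=
        Finset.prod_congr rfl fun _ _ => by ring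
    _ ≤ Real.exp (∑ t, (ε ^ 2 / a t - ε ^ 2)) :=
        prod_one_add_le_exp_sum _ fun t _ => by linarith [hgain t]
    _ ≤ Real.exp ((m : ℝ) ^ (-(2 * p - r - 1))) := by
        refine Real.exp_le_exp.mpr ?_
        calc ∑ t, (ε ^ 2 / a t - ε ^ 2) ≤ ∑ _t : Fin m, (m : ℝ) ^ (r - 2 * p) :=
              Finset.sum_le_sum fun t _ => by linarith [hterm t, sq_nonneg ε]
          _ = (m : ℝ) ^ (-(2 * p - r - 1)) := by
              rw [Finset.sum_const, Finset.card_univ, Fintype.card_fin, nsmul_eq_mul,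
                show -(2 * p - r - 1) = 1 + (r - 2 * p) by ring, Real.rpow_add hm0, Real.rpow_one]

theorem TV_nullLaw_altLaw_le_sqrt_exp {m : ℕ} (hm : 1 ≤ m) {p r : ℝ} (hp : 0 ≤ p)
    {a : Fin m → ℝ} (ha0 : ∀ t, 0 < a t) (ha1 : ∀ t, a t ≤ 1)
    (har : ∀ t, (m : ℝ) ^ (-r) ≤ a t) :
    TV (nullLaw m) (altLaw m ((m : ℝ) ^ (-p)) a) ≤
      √(Real.exp ((m : ℝ) ^ (-(2 * p - r - 1))) - 1) := by
  have hm1 : (1 : ℝ) ≤ m := Nat.one_le_cast.mpr hm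
  refine (TV_nullLaw_altLaw_le (Real.rpow_nonneg (by linarith) _)
    (Real.rpow_le_one_of_one_le_of_nonpos hm1 (neg_nonpos.mpr hp)) ha0 ha1).trans ?_
  exact Real.sqrt_le_sqrt (sub_le_sub_right
    (prod_one_sub_sq_add_sq_div_le_exp hm ha0 ha1 har) 1)

theorem impossibility_of_detection_general (r p : ℝ) (hp0 : 0 < p) (hpr : 2 * p - r > 1)
    (a : (m : ℕ) → Fin m → ℝ)
    (ha0 : ∀ m, 2 ≤ m → ∀ t, 0 < a m t) (ha1 : ∀ m, 2 ≤ m → ∀ t, a m t ≤ 1)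
    (har : ∀ m : ℕ, 2 ≤ m → ∀ t, (m : ℝ) ^ (-r) ≤ a m t) :
    Tendsto (fun m => TV (nullLaw m) (altLaw m ((m : ℝ) ^ (-p)) (a m))) atTop (nhds 0)
    ∧ ∀ A : (m : ℕ) → Set (Fin m → ℝ), (∀ m, MeasurableSet (A m)) →
        Tendsto
          (fun m => (nullLaw m (A m)).toReal
            + (altLaw m ((m : ℝ) ^ (-p)) (a m) (A m)ᶜ).toReal)
          atTop (nhds 1) := by
  have hTV_le : ∀ᶠ m in atTop, TV (nullLaw m) (altLaw m ((m : ℝ) ^ (-p)) (a m)) ≤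
      √(Real.exp ((m : ℝ) ^ (-(2 * p - r - 1))) - 1) := by
    filter_upwards [eventually_ge_atTop 2] with m hm
    exact TV_nullLaw_altLaw_le_sqrt_exp (by omega) hp0.le (ha0 m hm) (ha1 m hm) (har m hm)
  have hbound : Tendsto (fun m : ℕ => √(Real.exp ((m : ℝ) ^ (-(2 * p - r - 1))) - 1))
      atTop (nhds 0) := by
    have hcont := (by fun_prop : Continuous fun x : ℝ => √(Real.exp x - 1)).tendsto 0
    rw [Real.exp_zero, sub_self, Real.sqrt_zero] at hcont
    exact hcont.comp ((tendsto_rpow_neg_atTop (by linarith)).comp tendsto_natCast_atTop_atTop)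
  have hTV := squeeze_zero' (.of_forall fun _ => TV_nonneg) hTV_le hbound
  refine ⟨hTV, fun A hA => tendsto_iff_dist_tendsto_zero.mpr
    (squeeze_zero' (.of_forall fun _ => dist_nonneg) ?_ hTV)⟩
  filter_upwards [eventually_ge_atTop 2] with m hm
  have hm1 : (1 : ℝ) ≤ m := Nat.one_le_cast.mpr (by omega)
  have := isProbabilityMeasure_altLaw (Real.rpow_nonneg (by linarith) _)
    (Real.rpow_le_one_of_one_le_of_nonpos hm1 (neg_nonpos.mpr hp0.le)) (ha0 m hm)
  rw [Real.dist_eq]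
  exact abs_measureReal_add_measureReal_compl_sub_one_le_TV (hA m)

/-- **Theorem 3.1 (impossibility of detection).** Let `0 < r, p < 1` with `2p - r > 1`,
`ε_m = m^{-p}`, and `a m t ∈ (0,1]` with `a m t ≥ m^{-r}` for all `m ≥ 2`, `1 ≤ t ≤ m`.
Then `TV(P0_m, P1_m) → 0` as `m → ∞`; consequently, for every sequence of measurable
rejection regions `A m`, the sum of the type I error `P0_m(A m)` and the type II error
`P1_m((A m)ᶜ)` tends to `1`. -/
theorem impossibility_of_detection (r p : ℝ) (hr0 : 0 < r) (hr1 : r < 1)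
    (hp0 : 0 < p) (hp1 : p < 1) (hpr : 2 * p - r > 1)
    (a : (m : ℕ) → Fin m → ℝ)
    (ha0 : ∀ m, 2 ≤ m → ∀ t, 0 < a m t) (ha1 : ∀ m, 2 ≤ m → ∀ t, a m t ≤ 1)
    (har : ∀ m : ℕ, 2 ≤ m → ∀ t, (m : ℝ) ^ (-r) ≤ a m t) :
    Tendsto (fun m => TV (nullLaw m) (altLaw m ((m : ℝ) ^ (-p)) (a m))) atTop (nhds 0)
    ∧ ∀ A : (m : ℕ) → Set (Fin m → ℝ), (∀ m, MeasurableSet (A m)) →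
        Tendsto
          (fun m => (nullLaw m (A m)).toReal
            + (altLaw m ((m : ℝ) ^ (-p)) (a m) (A m)ᶜ).toReal)
          atTop (nhds 1) :=
  impossibility_of_detection_general r p hp0 hpr a ha0 ha1 har
end

section
/- Let α ∈ (0,1) and δ ∈ (0,1). For each m ≥ 1 let k_m ∈ {0,1,…,m}, set ε_m = k_m/m, and let ζ_1,…,ζ_m be independent with ζ_t uniform on [0,1−δ] for t ≤ k_m and uniform on [0,1] for t > k_m. Let π_m = P(max_{1≤t≤m} ζ_t ≤ α^{1/m}) be the power of the level-α order-statistic test. Then π_m ≤ α^{1−ε_m} for every m; consequently, if the sequence (ε_m) does not converge to 1, then the power π_m does not converge to 1 — indeed there exist η > 0 and infinitely many m with π_m ≤ α^η < 1. (Proposition A.3.) -/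
open MeasureTheory Filter

/-- The law of `(ζ_1, …, ζ_m)` under the substitution-attacked alternative: the first `k`
coordinates are uniform on `[0, 1-δ]` (carrying the watermark signal) and the remaining
`m - k` coordinates are uniform on `[0,1]`, all independent. -/
noncomputable def attackedLaw (m k : ℕ) (δ : ℝ) : Measure (Fin m → ℝ) :=
  Measure.pi fun t => if (t : ℕ) < k then unif (1 - δ) else unif 1

/-- The power `π_m = ℙ(max_t ζ_t ≤ α^{1/m})` of the level-`α` order-statistic test under
the substitution-attacked alternative. -/
noncomputable def osPower (α δ : ℝ) (m k : ℕ) : ℝ :=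
  (attackedLaw m k δ {ζ | ∀ t, ζ t ≤ α ^ ((1 : ℝ) / m)}).toReal

lemma unif_apply (a : ℝ) (s : Set ℝ) :
    unif a s = (ENNReal.ofReal a)⁻¹ * volume (s ∩ Set.Icc 0 a) := by
  simp [unif, Measure.restrict_apply' measurableSet_Icc]

lemma unif_univ {a : ℝ} (ha : 0 < a) : unif a Set.univ = 1 := by
  rw [unif_apply]
  rw [Set.univ_inter, Real.volume_Icc, sub_zero, ENNReal.inv_mul_cancel]
  · simp [ENNReal.ofReal_pos.2 ha, ne_of_gt]
  · exact ENNReal.ofReal_ne_top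

instance : ∀ a : ℝ, IsFiniteMeasure (unif a) := by
  intro a
  constructor
  rw [unif_apply]
  rcases le_or_gt a 0 with h | h
  · simp [ENNReal.ofReal_eq_zero.2 h]
  · rw [Set.univ_inter, Real.volume_Icc, sub_zero, ENNReal.inv_mul_cancel]
    · exact ENNReal.one_lt_top
    · simp [ENNReal.ofReal_pos.2 h, ne_of_gt]
    · exact ENNReal.ofReal_ne_top

lemma unif_le_one {a : ℝ} (ha : 0 < a) (s : Set ℝ) : unif a s ≤ 1 := by
  rw [← unif_univ ha]; exact measure_mono (Set.subset_univ s)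

lemma unif_one_Iic {c : ℝ} (h0 : 0 ≤ c) (h1 : c ≤ 1) :
    unif 1 (Set.Iic c) = ENNReal.ofReal c := by
  rw [unif_apply]
  have : Set.Iic c ∩ Set.Icc 0 1 = Set.Icc 0 c := by
    ext x; simp only [Set.mem_inter_iff, Set.mem_Iic, Set.mem_Icc]
    constructor
    · rintro ⟨h, h2, _⟩; exact ⟨h2, h⟩
    · rintro ⟨h2, h⟩; exact ⟨h, h2, h.trans h1⟩
  rw [this, Real.volume_Icc]
  simp

lemma card_filter_not_lt {m k : ℕ} (hk : k ≤ m) :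
    (Finset.univ.filter fun t : Fin m => ¬ (t : ℕ) < k).card = m - k := by
  have h1 : (Finset.univ.filter fun t : Fin m => (t : ℕ) < k)
      = Finset.map (Fin.castLEEmb hk) Finset.univ := by
    ext t
    simp only [Finset.mem_filter, Finset.mem_univ, true_and, Finset.mem_map,
      Fin.castLEEmb_apply]
    constructor
    · intro h; exact ⟨⟨t, h⟩, rfl⟩
    · rintro ⟨s, rfl⟩; simpa using s.2
  have h2 := Finset.card_filter_add_card_filter_not
    (s := (Finset.univ : Finset (Fin m))) (p := fun t : Fin m => (t : ℕ) < k)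
  rw [h1] at h2
  simp only [Finset.card_map, Finset.card_univ, Fintype.card_fin] at h2
  omega

lemma attackedLaw_bound {α δ : ℝ} (hα : α ∈ Set.Ioo (0 : ℝ) 1) (hδ : δ ∈ Set.Ioo (0 : ℝ) 1)
    {m k : ℕ} (hk : k ≤ m) :
    attackedLaw m k δ {ζ | ∀ t, ζ t ≤ α ^ ((1 : ℝ) / m)}
      ≤ ENNReal.ofReal (α ^ ((1 : ℝ) / m)) ^ (m - k) := by
  set c : ℝ := α ^ ((1 : ℝ) / m) with hc
  have hc0 : 0 < c := Real.rpow_pos_of_pos hα.1 _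
  have hc1 : c ≤ 1 := Real.rpow_le_one hα.1.le hα.2.le (by positivity)
  have hδ' : (0 : ℝ) < 1 - δ := by linarith [hδ.2]
  have hset : {ζ : Fin m → ℝ | ∀ t, ζ t ≤ c} = Set.univ.pi fun _ => Set.Iic c := by
    ext ζ; simp only [Set.mem_setOf_eq, Set.mem_pi, Set.mem_univ, Set.mem_Iic, true_implies]
  haveI : ∀ t : Fin m, SigmaFinite ((fun t : Fin m =>
      if (t : ℕ) < k then unif (1 - δ) else unif 1) t) := fun t => by
    dsimp only; split <;> infer_instance
  rw [attackedLaw, hset, Measure.pi_pi]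
  calc ∏ t : Fin m, (if (t : ℕ) < k then unif (1 - δ) else unif 1) (Set.Iic c)
      ≤ ∏ t : Fin m, (if (t : ℕ) < k then 1 else ENNReal.ofReal c) := by
        refine Finset.prod_le_prod' fun t _ => ?_
        by_cases h : (t : ℕ) < k
        · simpa [h] using unif_le_one hδ' (Set.Iic c)
        · simp [h, unif_one_Iic hc0.le hc1]
    _ = ENNReal.ofReal c ^ (m - k) := by
        rw [Finset.prod_ite, Finset.prod_const, Finset.prod_const, one_pow, one_mul,
          card_filter_not_lt hk]

/-- **Proposition A.3.** Let `α, δ ∈ (0,1)`; for each `m ≥ 1` let `k m ≤ m`,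
`ε_m = k m / m`, and let `π_m` be the power of the level-`α` order-statistic test under the
substitution-attacked alternative.  Then `π_m ≤ α^{1-ε_m}` for every `m ≥ 1`; consequently,
if `(ε_m)` does not converge to `1`, then `(π_m)` does not converge to `1` — indeed there
exist `η > 0` (with `α^η < 1`) and infinitely many `m` with `π_m ≤ α^η`. -/
theorem order_statistic_test_suboptimal (α δ : ℝ)
    (hα : α ∈ Set.Ioo (0 : ℝ) 1) (hδ : δ ∈ Set.Ioo (0 : ℝ) 1)
    (k : ℕ → ℕ) (hk : ∀ m, k m ≤ m) :
    (∀ m : ℕ, 1 ≤ m → osPower α δ m (k m) ≤ α ^ (1 - (k m : ℝ) / m))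
    ∧ (¬ Tendsto (fun m : ℕ => (k m : ℝ) / m) atTop (nhds 1) →
        ¬ Tendsto (fun m : ℕ => osPower α δ m (k m)) atTop (nhds 1)
        ∧ ∃ η > (0 : ℝ), α ^ η < 1 ∧ ∃ᶠ m in atTop, osPower α δ m (k m) ≤ α ^ η) := by
  have main : ∀ m : ℕ, 1 ≤ m → osPower α δ m (k m) ≤ α ^ (1 - (k m : ℝ) / m) := by
    intro m hm
    have hm0 : (m : ℝ) ≠ 0 := Nat.cast_ne_zero.2 (by omega)
    set c : ℝ := α ^ ((1 : ℝ) / m) with hc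
    have hc0 : 0 < c := Real.rpow_pos_of_pos hα.1 _
    have h1 : osPower α δ m (k m) ≤ c ^ (m - k m) := by
      have := attackedLaw_bound hα hδ (hk m)
      have := ENNReal.toReal_mono (by simp [ENNReal.pow_ne_top]) this
      rwa [ENNReal.toReal_pow, ENNReal.toReal_ofReal hc0.le] at this
    have h2 : c ^ (m - k m) = α ^ (1 - (k m : ℝ) / m) := by
      rw [← Real.rpow_natCast c (m - k m), hc, ← Real.rpow_mul hα.1.le]
      congr 1
      rw [Nat.cast_sub (hk m)]
      field_simp
    linarith [h2 ▸ h1]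
  refine ⟨main, fun hnot => ?_⟩
  rw [Metric.tendsto_atTop] at hnot
  push_neg at hnot
  obtain ⟨η, hη, hfreq⟩ := hnot
  have hαη : α ^ η < 1 := Real.rpow_lt_one hα.1.le hα.2 hη
  have hfreq' : ∃ᶠ m in atTop, osPower α δ m (k m) ≤ α ^ η := by
    rw [frequently_atTop]
    intro N
    obtain ⟨n, hn, hd⟩ := hfreq (max N 1)
    have hn1 : 1 ≤ n := le_trans (le_max_right N 1) hn
    refine ⟨n, le_trans (le_max_left N 1) hn, ?_⟩
    have hle1 : (k n : ℝ) / n ≤ 1 := by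
      rw [div_le_one (by positivity : (0:ℝ) < (n:ℝ))]
      exact_mod_cast hk n
    have : η ≤ 1 - (k n : ℝ) / n := by
      rw [Real.dist_eq, abs_sub_comm, abs_of_nonneg (by linarith)] at hd
      linarith
    calc osPower α δ n (k n) ≤ α ^ (1 - (k n : ℝ) / n) := main n hn1
      _ ≤ α ^ η := Real.rpow_le_rpow_of_exponent_ge hα.1 hα.2.le this
  refine ⟨fun hT => ?_, η, hη, hαη, hfreq'⟩
  have hev : ∀ᶠ m in atTop, α ^ η < osPower α δ m (k m) :=
    hT.eventually (eventually_gt_nhds hαη)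
  obtain ⟨n, hn1, hn2⟩ := (hfreq'.and_eventually hev).exists
  linarith
end

section
/- Let W be a nonempty finite type, P a probability mass function on W, G ⊆ W with P_G := Σ_{w∈G} P_w > 0, and δ > 0. Set C = 1 + (e^δ − 1)·P_G and define the soft green-list distribution Q by Q_w = e^δ·P_w/C for w ∈ G and Q_w = P_w/C for w ∉ G. Let (ζ, w) be produced by the one-step speculative (rejection) sampler with draft distribution Q and target distribution P. Then the conditional distribution of ζ given the event {w ∈ G} is uniform on [0, C/e^δ] = [0, P_G + (1−P_G)/e^δ]; equivalently, for every Borel set A ⊆ [0,1], the probability of {ζ ∈ A and w ∈ G} equals P_G · (e^δ/C) · Leb(A ∩ [0, C/e^δ]). (Lemma A.4.) -/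
/-! On a green token `w` the draft satisfies `Q w = P w / t` with threshold `t = C / e^δ ∈ (0, 1]`,
so `w` is never produced by resampling the excess `max 0 (P - Q)` and is accepted exactly when
`ζ ≤ t`. Hence the joint density of `(ζ, w)` is `Q w · 1[ζ ≤ t]`, and summing over `G` gives
`P_G · (e^δ / C) · 1[ζ ≤ t]`. -/

open MeasureTheory Set

/-- Density in `z` of the event `{ζ = z, output = w₀}` of the one-step speculative sampler:
the draft `w₀` is accepted, or some draft is rejected and `w₀` is resampled from the excess. -/
noncomputable def speculativeDensity {W : Type*} [Fintype W] (P Q : W → ℝ) (w₀ : W) (z : ℝ) :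
    ℝ :=
  Q w₀ * (if z * Q w₀ ≤ P w₀ then 1 else 0)
    + (∑ w', Q w' * (if z * Q w' ≤ P w' then 0 else 1))
      * (max 0 (P w₀ - Q w₀) / ∑ w', max 0 (P w' - Q w'))

theorem speculativeDensity_of_eq_div {W : Type*} [Fintype W] {P Q : W → ℝ} {w₀ : W} {t : ℝ}
    (hP : 0 ≤ P w₀) (ht0 : 0 < t) (ht1 : t ≤ 1) (hQ : Q w₀ = P w₀ / t) (z : ℝ) :
    speculativeDensity P Q w₀ z = Q w₀ * (Iic t).indicator 1 z := by
  have hPQ : P w₀ ≤ Q w₀ := by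
    rw [hQ, le_div_iff₀ ht0]
    exact mul_le_of_le_one_right hP ht1
  have hexcess : max 0 (P w₀ - Q w₀) = 0 := max_eq_left (by linarith)
  rw [speculativeDensity, hexcess, zero_div, mul_zero, add_zero]
  rcases hP.eq_or_lt with hP0 | hPpos
  · simp [hQ, ← hP0]
  · have haccept : z * Q w₀ ≤ P w₀ ↔ z ≤ t := by
      rw [hQ, mul_div_assoc', div_le_iff₀ ht0, mul_comm z, mul_le_mul_iff_right₀ hPpos]
    simp only [haccept, indicator_apply, mem_Iic, Pi.one_apply]

theorem setIntegral_inter_Icc_const_mul_indicator_Iic {A : Set ℝ} {t : ℝ} (ht : t ≤ 1) (c : ℝ) :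
    ∫ z in A ∩ Icc 0 1, c * (Iic t).indicator 1 z = c * volume.real (A ∩ Icc 0 t) := by
  have hIcc : Icc (0 : ℝ) 1 ∩ Iic t = Icc 0 t := by
    ext z
    simp only [mem_inter_iff, mem_Icc, mem_Iic]
    exact ⟨fun h => ⟨h.1.1, h.2⟩, fun h => ⟨⟨h.1, h.2.trans ht⟩, h.2⟩⟩
  rw [integral_const_mul, setIntegral_indicator measurableSet_Iic, inter_assoc, hIcc]
  simp only [Pi.one_apply, setIntegral_const, smul_eq_mul, mul_one]

theorem toReal_measure_and_mem_finset {Ω α W : Type*} [MeasurableSpace Ω] [MeasurableSpace W]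
    [MeasurableSingletonClass W] {μ : Measure Ω} [IsFiniteMeasure μ] (Y : Ω → α) (A : Set α)
    {X : Ω → W} (hX : Measurable X) (G : Finset W) :
    (μ {ω | Y ω ∈ A ∧ X ω ∈ G}).toReal = ∑ w ∈ G, (μ {ω | Y ω ∈ A ∧ X ω = w}).toReal := by
  rw [← ENNReal.toReal_sum fun _ _ => measure_ne_top μ _]
  congr 1
  have hsplit := sum_measure_preimage_singleton (μ := μ.restrict (Y ⁻¹' A)) G
    fun w _ => hX (measurableSet_singleton w)
  simp only [Measure.restrict_apply (hX (measurableSet_singleton _)),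
    Measure.restrict_apply (hX G.measurableSet)] at hsplit
  rw [show {ω | Y ω ∈ A ∧ X ω ∈ G} = X ⁻¹' G ∩ Y ⁻¹' A from inter_comm _ _, ← hsplit]
  exact Finset.sum_congr rfl fun w _ => congrArg μ (inter_comm _ _)

theorem one_add_sub_one_mul_div_mem_Ioc {E p : ℝ} (hE : 1 ≤ E) (hp0 : 0 ≤ p) (hp1 : p ≤ 1) :
    (1 + (E - 1) * p) / E ∈ Ioc 0 1 := by
  have hEpos : 0 < E := by linarith
  exact ⟨div_pos (by nlinarith) hEpos, (div_le_one hEpos).mpr (by nlinarith)⟩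

theorem soft_greenlist_cond_given_green_general
    {W : Type*} [Fintype W] [DecidableEq W]
    [MeasurableSpace W] [MeasurableSingletonClass W]
    (P : W → ℝ) (hP0 : ∀ w, 0 ≤ P w) (hP1 : ∑ w, P w = 1)
    (G : Finset W) (PG : ℝ) (hPG : PG = ∑ w ∈ G, P w)
    (δ : ℝ) (hδ : 0 < δ)
    (C : ℝ) (hC : C = 1 + (Real.exp δ - 1) * PG)
    (Q : W → ℝ)
    (hQ : ∀ w, Q w = if w ∈ G then Real.exp δ * P w / C else P w / C)
    {Ω : Type*} [MeasurableSpace Ω] (μ : Measure Ω) [IsProbabilityMeasure μ]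
    (ζ : Ω → ℝ) (tok : Ω → W) (htok : Measurable tok)
    (hjoint : ∀ (w₀ : W) (A : Set ℝ), MeasurableSet A →
      (μ {ω | ζ ω ∈ A ∧ tok ω = w₀}).toReal =
        ∫ z in A ∩ Icc (0 : ℝ) 1,
          (Q w₀ * (if z * Q w₀ ≤ P w₀ then 1 else 0)
            + (∑ w', Q w' * (if z * Q w' ≤ P w' then 0 else 1))
              * (max 0 (P w₀ - Q w₀) / ∑ w', max 0 (P w' - Q w')))) :
    ∀ A : Set ℝ, MeasurableSet A →
      (μ {ω | ζ ω ∈ A ∧ tok ω ∈ G}).toReal =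
        PG * (Real.exp δ / C) * (volume (A ∩ Icc 0 (C / Real.exp δ))).toReal := by
  intro A hA
  have hPG0 : 0 ≤ PG := hPG ▸ G.sum_nonneg fun w _ => hP0 w
  have hPG1 : PG ≤ 1 := hPG ▸ hP1 ▸ G.sum_le_univ_sum_of_nonneg hP0
  obtain ⟨ht0, ht1⟩ := hC ▸ one_add_sub_one_mul_div_mem_Ioc (Real.one_le_exp hδ.le) hPG0 hPG1
  have hQG : ∀ w ∈ G, Q w = P w / (C / Real.exp δ) := fun w hw => by
    rw [hQ, if_pos hw, div_div_eq_mul_div, mul_comm]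
  have hgreen : ∀ w ∈ G, (μ {ω | ζ ω ∈ A ∧ tok ω = w}).toReal
      = P w * (Real.exp δ / C) * volume.real (A ∩ Icc 0 (C / Real.exp δ)) := fun w hw => by
    rw [hjoint w A hA]
    change ∫ z in _, speculativeDensity P Q w z = _
    simp_rw [speculativeDensity_of_eq_div (hP0 w) ht0 ht1 (hQG w hw)]
    rw [setIntegral_inter_Icc_const_mul_indicator_Iic ht1, hQG w hw, div_div_eq_mul_div,
      mul_div_assoc]
  rw [toReal_measure_and_mem_finset ζ A htok G, Finset.sum_congr rfl hgreen, ← Finset.sum_mul,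
    ← Finset.sum_mul, ← hPG, measureReal_def]

/-- **Lemma A.4 (soft green-list watermark via one-step speculative sampling).**
`W` is a nonempty finite vocabulary, `P` a probability mass function on `W`, `G` a green
list with `PG = ∑ w ∈ G, P w > 0`, `δ > 0`, `C = 1 + (e^δ - 1)·PG`, and `Q` is the soft
green-list distribution: `Q w = e^δ·P w / C` for `w ∈ G` and `Q w = P w / C` otherwise.
The one-step speculative (rejection) sampler with draft `Q` and target `P` produces
`(ζ, tok)`: `ζ` is uniform on `[0,1]`, a draft `W' ~ Q` is drawn independently, accepted
(`tok = W'`) iff `ζ·Q_{W'} ≤ P_{W'}`, and otherwise `tok` is drawn independently from the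
normalized excess distribution `w ↦ max 0 (P w - Q w) / ∑ w', max 0 (P w' - Q w')`; the
resulting joint law is encoded by `hjoint` (as a density in `z` on `[0,1]`).
Conclusion: the conditional distribution of `ζ` given `{tok ∈ G}` is uniform on
`[0, C/e^δ]`; equivalently, for every Borel set `A`,
`ℙ(ζ ∈ A ∧ tok ∈ G) = PG · (e^δ/C) · Leb(A ∩ [0, C/e^δ])`. -/
theorem soft_greenlist_cond_given_green
    {W : Type*} [Fintype W] [Nonempty W] [DecidableEq W]
    [MeasurableSpace W] [MeasurableSingletonClass W]
    (P : W → ℝ) (hP0 : ∀ w, 0 ≤ P w) (hP1 : ∑ w, P w = 1)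
    (G : Finset W) (PG : ℝ) (hPG : PG = ∑ w ∈ G, P w) (hPGpos : 0 < PG)
    (δ : ℝ) (hδ : 0 < δ)
    (C : ℝ) (hC : C = 1 + (Real.exp δ - 1) * PG)
    (Q : W → ℝ)
    (hQ : ∀ w, Q w = if w ∈ G then Real.exp δ * P w / C else P w / C)
    {Ω : Type*} [MeasurableSpace Ω] (μ : Measure Ω) [IsProbabilityMeasure μ]
    (ζ : Ω → ℝ) (tok : Ω → W) (hζ : Measurable ζ) (htok : Measurable tok)
    (hjoint : ∀ (w₀ : W) (A : Set ℝ), MeasurableSet A →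
      (μ {ω | ζ ω ∈ A ∧ tok ω = w₀}).toReal =
        ∫ z in A ∩ Icc (0 : ℝ) 1,
          (Q w₀ * (if z * Q w₀ ≤ P w₀ then 1 else 0)
            + (∑ w', Q w' * (if z * Q w' ≤ P w' then 0 else 1))
              * (max 0 (P w₀ - Q w₀) / ∑ w', max 0 (P w' - Q w')))) :
    ∀ A : Set ℝ, MeasurableSet A →
      (μ {ω | ζ ω ∈ A ∧ tok ω ∈ G}).toReal =
        PG * (Real.exp δ / C) * (volume (A ∩ Icc 0 (C / Real.exp δ))).toReal :=
  soft_greenlist_cond_given_green_general P hP0 hP1 G PG hPG δ hδ C hC Q hQ μ ζ tok htok hjoint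
end

section
/- Let W be a nonempty finite type and let P, Q be probability mass functions on W. Let ζ be uniform on [0,1] and W' be drawn from Q independently of ζ, and let Accept denote the event {ζ·Q_{W'} ≤ P_{W'}}. Then P(Accept) = Σ_{w∈W} min(P_w, Q_w). -/
open MeasureTheory Set

/-- **Acceptance probability of speculative sampling.** `W` is a nonempty finite
vocabulary and `P, Q` are probability mass functions on `W`.  `ζ` is uniform on `[0,1]`
and the draft token `W'` is drawn from `Q` independently of `ζ` (joint law encoded by
`hjoint`).  With `Accept = {ζ·Q_{W'} ≤ P_{W'}}`, we have
`ℙ(Accept) = ∑ w, min (P w) (Q w)`. -/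
theorem speculative_accept_prob
    {W : Type*} [Fintype W] [Nonempty W] [MeasurableSpace W] [MeasurableSingletonClass W]
    (P Q : W → ℝ) (hP0 : ∀ w, 0 ≤ P w) (hQ0 : ∀ w, 0 ≤ Q w)
    (hP1 : ∑ w, P w = 1) (hQ1 : ∑ w, Q w = 1)
    {Ω : Type*} [MeasurableSpace Ω] (μ : Measure Ω) [IsProbabilityMeasure μ]
    (ζ : Ω → ℝ) (W' : Ω → W) (hζ : Measurable ζ) (hW' : Measurable W')
    (hjoint : ∀ (w : W) (A : Set ℝ), MeasurableSet A →
      (μ {ω | ζ ω ∈ A ∧ W' ω = w}).toReal = (volume (A ∩ Icc 0 1)).toReal * Q w) :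
    (μ {ω | ζ ω * Q (W' ω) ≤ P (W' ω)}).toReal = ∑ w, min (P w) (Q w) := by
  classical
  set A : W → Set ℝ := fun w => {x : ℝ | x * Q w ≤ P w} with hA
  have hAmeas : ∀ w, MeasurableSet (A w) := fun w =>
    measurableSet_le (measurable_id.mul_const _) measurable_const
  have hsplit : {ω | ζ ω * Q (W' ω) ≤ P (W' ω)} = ⋃ w, {ω | ζ ω ∈ A w ∧ W' ω = w} := by
    ext ω
    simp only [mem_iUnion, mem_setOf_eq, hA]
    constructor
    · intro h; exact ⟨W' ω, h, rfl⟩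
    · rintro ⟨w, h, rfl⟩; exact h
  have hmeas : ∀ w, MeasurableSet {ω | ζ ω ∈ A w ∧ W' ω = w} := by
    intro w
    have : {ω | ζ ω ∈ A w ∧ W' ω = w} = ζ ⁻¹' (A w) ∩ W' ⁻¹' {w} := by
      ext ω; simp [Set.mem_preimage]
    rw [this]
    exact (hζ (hAmeas w)).inter (hW' (measurableSet_singleton w))
  have hdisj : Pairwise (Function.onFun Disjoint fun w => {ω | ζ ω ∈ A w ∧ W' ω = w}) := by
    intro v w hvw
    refine Set.disjoint_left.2 ?_
    rintro ω ⟨_, rfl⟩ ⟨_, h2⟩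
    exact hvw h2
  rw [hsplit, measure_iUnion hdisj hmeas, tsum_fintype,
    ENNReal.toReal_sum (fun w _ => measure_ne_top μ _)]
  refine Finset.sum_congr rfl fun w _ => ?_
  rw [hjoint w (A w) (hAmeas w)]
  rcases eq_or_lt_of_le (hQ0 w) with hq | hq
  · have : A w = Set.univ := by
      ext x; simp [hA, ← hq, hP0 w]
    simp [← hq, min_eq_right (hP0 w)]
  · have hAw : A w = Iic (P w / Q w) := by
      ext x; simp [hA, le_div_iff₀ hq]
    have hd : 0 ≤ P w / Q w := div_nonneg (hP0 w) hq.le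
    have hint : A w ∩ Icc 0 1 = Icc 0 (min (P w / Q w) 1) := by
      rw [hAw]
      ext x
      simp only [mem_inter_iff, mem_Iic, mem_Icc, le_min_iff]
      tauto
    rw [hint, Real.volume_Icc, ENNReal.toReal_ofReal (by simpa using le_min hd zero_le_one),
      sub_zero, min_mul_of_nonneg _ _ hq.le, div_mul_cancel₀ _ hq.ne', one_mul]
end

section
/- Let W be a nonempty finite type and let P, Q be probability mass functions on W with Σ_{w∈W} min(P_w, Q_w) > 0. Let ζ be uniform on [0,1] and W' be drawn from Q independently of ζ, and let Accept denote the event {ζ·Q_{W'} ≤ P_{W'}}. Then conditionally on Accept, the token W' is distributed according to the normalized overlap distribution: P(W' = w | Accept) = min(P_w, Q_w) / Σ_{w'∈W} min(P_{w'}, Q_{w'}) for every w ∈ W. -/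
open MeasureTheory Set

/-- **Conditional law of the draft given acceptance.** `W` is a nonempty finite vocabulary
and `P, Q` are probability mass functions on `W` with `∑ w, min (P w) (Q w) > 0`.  `ζ` is
uniform on `[0,1]` and the draft token `W'` is drawn from `Q` independently of `ζ` (joint
law encoded by `hjoint`).  Conditionally on `Accept = {ζ·Q_{W'} ≤ P_{W'}}`, the token `W'`
follows the normalized overlap distribution:
`ℙ(W' = w | Accept) = min (P w) (Q w) / ∑ w', min (P w') (Q w')`. -/
theorem speculative_cond_law_given_accept
    {W : Type*} [Fintype W] [Nonempty W] [MeasurableSpace W] [MeasurableSingletonClass W]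
    (P Q : W → ℝ) (hP0 : ∀ w, 0 ≤ P w) (hQ0 : ∀ w, 0 ≤ Q w)
    (hP1 : ∑ w, P w = 1) (hQ1 : ∑ w, Q w = 1)
    (hover : 0 < ∑ w, min (P w) (Q w))
    {Ω : Type*} [MeasurableSpace Ω] (μ : Measure Ω) [IsProbabilityMeasure μ]
    (ζ : Ω → ℝ) (W' : Ω → W) (hζ : Measurable ζ) (hW' : Measurable W')
    (hjoint : ∀ (w : W) (A : Set ℝ), MeasurableSet A →
      (μ {ω | ζ ω ∈ A ∧ W' ω = w}).toReal = (volume (A ∩ Icc 0 1)).toReal * Q w) :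
    ∀ w : W,
      ((ProbabilityTheory.cond μ {ω | ζ ω * Q (W' ω) ≤ P (W' ω)}) {ω | W' ω = w}).toReal
        = min (P w) (Q w) / ∑ w', min (P w') (Q w') := by
  set Acc : Set Ω := {ω | ζ ω * Q (W' ω) ≤ P (W' ω)} with hAcc
  have hQm : Measurable (Q ∘ W') := (measurable_of_countable Q).comp hW'
  have hPm : Measurable (P ∘ W') := (measurable_of_countable P).comp hW'
  have hAccMeas : MeasurableSet Acc :=
    measurableSet_le (hζ.mul hQm) hPm
  -- key computation
  have key : ∀ w : W, (μ (Acc ∩ {ω | W' ω = w})).toReal = min (P w) (Q w) := by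
    intro w
    have hset : Acc ∩ {ω | W' ω = w}
        = {ω | ζ ω ∈ {x : ℝ | x * Q w ≤ P w} ∧ W' ω = w} := by
      ext ω
      simp only [hAcc, Set.mem_inter_iff, Set.mem_setOf_eq]
      constructor
      · rintro ⟨h1, h2⟩; exact ⟨by rwa [h2] at h1, h2⟩
      · rintro ⟨h1, h2⟩; exact ⟨by rwa [h2], h2⟩
    have hA : MeasurableSet {x : ℝ | x * Q w ≤ P w} :=
      measurableSet_le (measurable_id.mul_const _) measurable_const
    rw [hset, hjoint w _ hA]
    rcases eq_or_lt_of_le (hQ0 w) with hQ | hQ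
    · rw [← hQ, mul_zero, min_eq_right (hP0 w)]
    · have hAeq : {x : ℝ | x * Q w ≤ P w} = Iic (P w / Q w) := by
        ext x; simp [Set.mem_setOf_eq, le_div_iff₀ hQ]
      have hr : 0 ≤ P w / Q w := div_nonneg (hP0 w) hQ.le
      have hinter : Iic (P w / Q w) ∩ Icc (0:ℝ) 1 = Icc 0 (min (P w / Q w) 1) := by
        ext x
        simp only [Set.mem_inter_iff, Set.mem_Iic, Set.mem_Icc, le_min_iff]
        tauto
      rw [hAeq, hinter, Real.volume_Icc, ENNReal.toReal_ofReal (by simp [hr]), sub_zero]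
      rw [ min_mul_of_nonneg _ _ hQ.le, div_mul_cancel₀ _ hQ.ne', one_mul]
  -- total acceptance probability
  have htot : (μ Acc).toReal = ∑ w, min (P w) (Q w) := by
    have hpart : Acc = ⋃ w : W, Acc ∩ {ω | W' ω = w} := by
      ext ω; simp [Set.mem_iUnion]
    have hdisj : Pairwise (Function.onFun Disjoint
        fun w : W => Acc ∩ {ω | W' ω = w}) := by
      intro a b hab
      refine Set.disjoint_left.2 ?_
      rintro ω ⟨_, ha⟩ ⟨_, hb⟩
      exact hab (ha.symm.trans hb)
    have hmeas : ∀ w : W, MeasurableSet (Acc ∩ {ω | W' ω = w}) := fun w =>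
      hAccMeas.inter (hW' (MeasurableSet.singleton w))
    rw [hpart, measure_iUnion hdisj hmeas, ENNReal.tsum_toReal_eq
      (fun w => measure_ne_top μ _), tsum_fintype]
    exact Finset.sum_congr rfl fun w _ => key w
  have hAccne : μ Acc ≠ 0 := by
    intro h
    rw [h] at htot
    simp at htot
    exact hover.ne' (htot ▸ rfl)
  intro w
  rw [ProbabilityTheory.cond_apply hAccMeas, ENNReal.toReal_mul, ENNReal.toReal_inv,
    key w, htot]
  ring
end

section
/- Let W be a nonempty finite type and let P, Q be probability mass functions on W with P ≠ Q (so that Σ_{w∈W} max(0, P_w − Q_w) > 0). Let (ζ, w) be produced by the one-step speculative (rejection) sampler with draft distribution Q and target distribution P: draw ζ uniform on [0,1] and W' ~ Q independently; if ζ·Q_{W'} ≤ P_{W'} output w = W', otherwise output w drawn independently from the normalized excess distribution w ↦ max(0, P_w − Q_w)/Σ_{w'} max(0, P_{w'} − Q_{w'}). Then the output token has marginal law P: P(w = w₀) = P_{w₀} for every w₀ ∈ W. (Equivalence of one-step speculative sampling with maximal coupling; unbiasedness of the speculative decoder.) -/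
open MeasureTheory Set

lemma spec_int_on (p q : ℝ) :
    IntegrableOn (fun z : ℝ => if z * q ≤ p then (1:ℝ) else 0) (Icc 0 1) := by
  have : (fun z : ℝ => if z * q ≤ p then (1:ℝ) else 0)
      = Set.indicator {z | z * q ≤ p} (fun _ => 1) := by
    ext z; simp [Set.indicator_apply]
  rw [this]
  exact (integrable_const 1).indicator
    (measurableSet_le (measurable_id.mul_const q) measurable_const)

lemma spec_int_val (p q : ℝ) (hp : 0 ≤ p) (hq : 0 ≤ q) :
    ∫ z in Icc (0:ℝ) 1, (q * if z * q ≤ p then (1:ℝ) else 0) = min p q := by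
  rw [MeasureTheory.integral_const_mul]
  rcases eq_or_lt_of_le hq with h0 | h0
  · simp [← h0, min_eq_right hp]
  have key : ∫ z in Icc (0:ℝ) 1, (if z * q ≤ p then (1:ℝ) else 0) = min 1 (p/q) := by
    have h1 : (fun z : ℝ => if z * q ≤ p then (1:ℝ) else 0)
        = Set.indicator (Iic (p/q)) (fun _ => 1) := by
      ext z; simp [Set.indicator_apply, le_div_iff₀ h0]
    have h2 : Icc (0:ℝ) 1 ∩ Iic (p/q) = Icc 0 (min 1 (p/q)) := by
      ext z; simp only [mem_inter_iff, mem_Icc, mem_Iic, le_min_iff]; tauto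
    rw [h1, setIntegral_indicator measurableSet_Iic, setIntegral_const, h2]
    simp [Real.volume_Icc, le_min_iff, div_nonneg hp hq]
  rw [key]
  rcases le_total p q with h | h
  · rw [min_eq_right (by rwa [div_le_one h0]), mul_div_cancel₀ _ h0.ne', min_eq_left h]
  · rw [min_eq_left (by rwa [one_le_div h0]), mul_one, min_eq_right h]


/-- **Unbiasedness of one-step speculative sampling (equivalence with maximal coupling).**
`W` is a nonempty finite vocabulary and `P, Q` are probability mass functions on `W` with
`P ≠ Q` (so `∑ w, max 0 (P w - Q w) > 0`).  The one-step speculative (rejection) sampler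
with draft `Q` and target `P` produces `(ζ, tok)`: `ζ` is uniform on `[0,1]`, a draft
`W' ~ Q` is drawn independently, accepted (`tok = W'`) iff `ζ·Q_{W'} ≤ P_{W'}`, and
otherwise `tok` is drawn independently from the normalized excess distribution
`w ↦ max 0 (P w - Q w) / ∑ w', max 0 (P w' - Q w')`; the resulting joint law is encoded by
`hjoint` (as a density in `z` on `[0,1]`).  Conclusion: the output token has marginal
law `P`. -/
theorem speculative_sampling_unbiased
    {W : Type*} [Fintype W] [Nonempty W] [MeasurableSpace W] [MeasurableSingletonClass W]
    (P Q : W → ℝ) (hP0 : ∀ w, 0 ≤ P w) (hQ0 : ∀ w, 0 ≤ Q w)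
    (hP1 : ∑ w, P w = 1) (hQ1 : ∑ w, Q w = 1) (hne : P ≠ Q)
    {Ω : Type*} [MeasurableSpace Ω] (μ : Measure Ω) [IsProbabilityMeasure μ]
    (ζ : Ω → ℝ) (tok : Ω → W) (hζ : Measurable ζ) (htok : Measurable tok)
    (hjoint : ∀ (w₀ : W) (A : Set ℝ), MeasurableSet A →
      (μ {ω | ζ ω ∈ A ∧ tok ω = w₀}).toReal =
        ∫ z in A ∩ Icc (0 : ℝ) 1,
          (Q w₀ * (if z * Q w₀ ≤ P w₀ then 1 else 0)
            + (∑ w', Q w' * (if z * Q w' ≤ P w' then 0 else 1))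
              * (max 0 (P w₀ - Q w₀) / ∑ w', max 0 (P w' - Q w')))) :
    ∀ w₀ : W, (μ {ω | tok ω = w₀}).toReal = P w₀ := by
  intro w₀
  -- the normalizing constant
  set S : ℝ := ∑ w', max 0 (P w' - Q w') with hS
  have hmax : ∀ w, max 0 (P w - Q w) = P w - min (P w) (Q w) := by
    intro w
    rcases le_total (P w) (Q w) with h | h
    · rw [min_eq_left h, max_eq_left (by linarith), sub_self]
    · rw [min_eq_right h, max_eq_right (by linarith)]
  have hSsum : S = 1 - ∑ w', min (P w') (Q w') := by
    rw [hS]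
    simp_rw [hmax]
    rw [Finset.sum_sub_distrib, hP1]
  have hSpos : 0 < S := by
    have hPQ : ∃ w, Q w < P w := by
      by_contra hc
      push_neg at hc
      apply hne
      funext w
      by_contra hw
      have hlt : P w < Q w := lt_of_le_of_ne (hc w) hw
      have : ∑ w', P w' < ∑ w', Q w' :=
        Finset.sum_lt_sum (fun i _ => hc i) ⟨w, Finset.mem_univ w, hlt⟩
      rw [hP1, hQ1] at this
      exact lt_irrefl _ this
    obtain ⟨w, hw⟩ := hPQ
    exact Finset.sum_pos' (fun i _ => le_max_left _ _)
      ⟨w, Finset.mem_univ w, lt_max_iff.mpr (Or.inr (sub_pos.mpr hw))⟩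
  -- use the joint law with A = univ
  have h := hjoint w₀ univ MeasurableSet.univ
  simp only [mem_univ, true_and, univ_inter] at h
  rw [h]
  -- integrability pieces
  have hint1 : ∀ w : W, IntegrableOn
      (fun z : ℝ => Q w * if z * Q w ≤ P w then (1:ℝ) else 0) (Icc 0 1) :=
    fun w => (spec_int_on (P w) (Q w)).const_mul _
  have hflip : ∀ (w : W) (z : ℝ),
      Q w * (if z * Q w ≤ P w then (0:ℝ) else 1)
        = Q w - Q w * (if z * Q w ≤ P w then (1:ℝ) else 0) := by
    intro w z; by_cases hc : z * Q w ≤ P w <;> simp [hc]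
  have hint2 : ∀ w : W, IntegrableOn
      (fun z : ℝ => Q w * if z * Q w ≤ P w then (0:ℝ) else 1) (Icc 0 1) := by
    intro w
    simp_rw [hflip w]
    exact (integrable_const (Q w)).sub (hint1 w)
  have hintsum : IntegrableOn
      (fun z : ℝ => (∑ w', Q w' * if z * Q w' ≤ P w' then (0:ℝ) else 1)
        * (max 0 (P w₀ - Q w₀) / S)) (Icc 0 1) := by
    apply Integrable.mul_const
    exact integrable_finset_sum _ (fun w _ => hint2 w)
  rw [MeasureTheory.integral_add (hint1 w₀) hintsum]
  -- first integral
  have hI1 : ∫ z in Icc (0:ℝ) 1, (Q w₀ * if z * Q w₀ ≤ P w₀ then (1:ℝ) else 0)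
      = min (P w₀) (Q w₀) := spec_int_val _ _ (hP0 w₀) (hQ0 w₀)
  -- per-token rejection integral
  have hI2 : ∀ w : W, ∫ z in Icc (0:ℝ) 1, (Q w * if z * Q w ≤ P w then (0:ℝ) else 1)
      = Q w - min (P w) (Q w) := by
    intro w
    simp_rw [hflip w]
    rw [MeasureTheory.integral_sub (integrable_const _) (hint1 w),
      setIntegral_const, spec_int_val _ _ (hP0 w) (hQ0 w)]
    simp [Real.volume_Icc]
  rw [MeasureTheory.integral_mul_const,
    MeasureTheory.integral_finset_sum _ (fun w _ => hint2 w)]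
  simp_rw [hI2]
  rw [Finset.sum_sub_distrib, hQ1, ← hSsum, mul_comm,
    div_mul_cancel₀ _ hSpos.ne', hI1, hmax w₀]
  ring
end
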